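/- arXiv:1909.02579 — 4 statements merged into one kernel-verified Lean document; each statement's English description precedes it below -/
import Mathlib

section
/- Let C be a class of matrices. If C contains a matrix having a row with at least two nonzero entries, then C contains a matrix D having a row with two nonzero entries of the same sign, i.e., there exist an index i and distinct indices j ≠ k with D_{i,j}·D_{i,k} > 0. -/
/-- The permutation matrix of a permutation `σ`: its `(i, j)` entry is `1` iff `i = σ j`. -/
def permMat {m : ℕ} (σ : Equiv.Perm (Fin m)) : Matrix (Fin m) (Fin m) ℤ :=
  Matrix.of fun i j => if i = σ j then 1 else 0

/-- `extMat A n` is the block-diagonal matrix `diag(A, I_n)`. -/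
def extMat {k : ℕ} (A : Matrix (Fin k) (Fin k) ℤ) (n : ℕ) :
    Matrix (Fin (k + n)) (Fin (k + n)) ℤ :=
  Matrix.reindex finSumFinEquiv finSumFinEquiv
    (Matrix.fromBlocks A 0 0 (1 : Matrix (Fin n) (Fin n) ℤ))

/-- A *class of matrices*: a set of square integer matrices of arbitrary sizes, closed
under conjugation by permutation matrices, extension by identity blocks, containing all
identity matrices, and closed under products of equal-size matrices. -/
structure MatrixClass where
  carrier : ∀ k : ℕ, Set (Matrix (Fin k) (Fin k) ℤ)
  perm_mem : ∀ {k : ℕ} (A : Matrix (Fin k) (Fin k) ℤ), A ∈ carrier k →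
    ∀ σ : Equiv.Perm (Fin k), permMat σ * A * permMat σ⁻¹ ∈ carrier k
  ext_mem : ∀ {k : ℕ} (A : Matrix (Fin k) (Fin k) ℤ), A ∈ carrier k →
    ∀ n : ℕ, 1 ≤ n → extMat A n ∈ carrier (k + n)
  one_mem : ∀ n : ℕ, 1 ≤ n → (1 : Matrix (Fin n) (Fin n) ℤ) ∈ carrier n
  mul_mem : ∀ {k : ℕ} (A B : Matrix (Fin k) (Fin k) ℤ),
    A ∈ carrier k → B ∈ carrier k → A * B ∈ carrier k

/-!
Among three nonzero entries of a row, two have the same sign, so the only case to handle is a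
row `i` of `A` whose nonzero entries are exactly `a = A i j₁` and `b = A i j₂`. Put
`B = diag(A, 1)` with new index `e`, and let `τ` be a permutation with `τ j₁ = i`, `τ j₂ = e`.
Row `i` of `B · τ(B)` is `a · (row i of B) + b · (row e of B)` with its columns permuted, so its
entries in the columns coming from `j₁`, `j₂`, `e` are `a²`, `ab`, `b`: again three nonzero
entries in one row.
-/

theorem exists_ne_pos_mul_of_three_ne_zero {ι R : Type*} [Ring R] [LinearOrder R]
    [IsStrictOrderedRing R] {v : ι → R} {j₁ j₂ j₃ : ι} (h₁₂ : j₁ ≠ j₂) (h₁₃ : j₁ ≠ j₃)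
    (h₂₃ : j₂ ≠ j₃) (h₁ : v j₁ ≠ 0) (h₂ : v j₂ ≠ 0) (h₃ : v j₃ ≠ 0) :
    ∃ j j', j ≠ j' ∧ 0 < v j * v j' := by
  rcases h₁.lt_or_gt with h₁ | h₁ <;> rcases h₂.lt_or_gt with h₂ | h₂
  · exact ⟨j₁, j₂, h₁₂, mul_pos_of_neg_of_neg h₁ h₂⟩
  · rcases h₃.lt_or_gt with h₃ | h₃
    · exact ⟨j₁, j₃, h₁₃, mul_pos_of_neg_of_neg h₁ h₃⟩
    · exact ⟨j₂, j₃, h₂₃, mul_pos h₂ h₃⟩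
  · rcases h₃.lt_or_gt with h₃ | h₃
    · exact ⟨j₂, j₃, h₂₃, mul_pos_of_neg_of_neg h₂ h₃⟩
    · exact ⟨j₁, j₃, h₁₃, mul_pos h₁ h₃⟩
  · exact ⟨j₁, j₂, h₁₂, mul_pos h₁ h₂⟩

theorem Matrix.mul_apply_of_row_support {l m n R : Type*} [Fintype m]
    [NonUnitalNonAssocSemiring R] {B : Matrix l m R} (C : Matrix m n R) {r : l} {p q : m}
    (hpq : p ≠ q) (hrow : ∀ j, j ≠ p → j ≠ q → B r j = 0) (c : n) :
    (B * C) r c = B r p * C p c + B r q * C q c := by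
  rw [Matrix.mul_apply]
  exact Fintype.sum_eq_add p q hpq fun j hj => by rw [hrow j hj.1 hj.2, zero_mul]

theorem permMat_eq_toMatrix {m : ℕ} (σ : Equiv.Perm (Fin m)) :
    permMat σ = σ.symm.toPEquiv.toMatrix := by
  ext i j
  simp [permMat, PEquiv.toMatrix_apply, Equiv.symm_apply_eq]

theorem permMat_mul_mul_permMat_inv {m : ℕ} (σ : Equiv.Perm (Fin m))
    (B : Matrix (Fin m) (Fin m) ℤ) :
    permMat σ * B * permMat σ⁻¹ = B.submatrix ⇑σ⁻¹ ⇑σ⁻¹ := by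
  rw [permMat_eq_toMatrix, permMat_eq_toMatrix, PEquiv.toMatrix_toPEquiv_mul,
    PEquiv.mul_toMatrix_toPEquiv]
  rfl

section extMat

variable {k : ℕ} (A : Matrix (Fin k) (Fin k) ℤ)

@[simp]
theorem extMat_one_castSucc_castSucc (p q : Fin k) :
    extMat A 1 p.castSucc q.castSucc = A p q := by
  simp [extMat]

@[simp]
theorem extMat_one_castSucc_last (p : Fin k) : extMat A 1 p.castSucc (Fin.last k) = 0 := by
  simp [extMat]

theorem extMat_one_last_apply (c : Fin (k + 1)) :
    extMat A 1 (Fin.last k) c = if c = Fin.last k then 1 else 0 := by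
  induction c using Fin.lastCases <;> simp [extMat]

end extMat

namespace MatrixClass

variable (C : MatrixClass)

theorem submatrix_mem {k : ℕ} {A : Matrix (Fin k) (Fin k) ℤ} (hA : A ∈ C.carrier k)
    (σ : Equiv.Perm (Fin k)) : A.submatrix σ σ ∈ C.carrier k := by
  have h := C.perm_mem A hA σ⁻¹
  rwa [permMat_mul_mul_permMat_inv, inv_inv] at h

theorem exists_row_three_ne_zero_of_row_support_pair {k : ℕ} {A : Matrix (Fin k) (Fin k) ℤ}
    (hA : A ∈ C.carrier k) {i j₁ j₂ : Fin k} (hj : j₁ ≠ j₂) (h₁ : A i j₁ ≠ 0)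
    (h₂ : A i j₂ ≠ 0) (hrow : ∀ j, j ≠ j₁ → j ≠ j₂ → A i j = 0) :
    ∃ M ∈ C.carrier (k + 1), ∃ (r c₁ c₂ c₃ : Fin (k + 1)),
      c₁ ≠ c₂ ∧ c₁ ≠ c₃ ∧ c₂ ≠ c₃ ∧ M r c₁ ≠ 0 ∧ M r c₂ ≠ 0 ∧ M r c₃ ≠ 0 := by
  have hB : extMat A 1 ∈ C.carrier (k + 1) := C.ext_mem A hA 1 le_rfl
  have hj' : j₁.castSucc ≠ j₂.castSucc := (Fin.castSucc_injective k).ne hj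
  have hrowB : ∀ j, j ≠ j₁.castSucc → j ≠ j₂.castSucc → extMat A 1 i.castSucc j = 0 := by
    intro j hj₁ hj₂
    induction j using Fin.lastCases with
    | last => exact extMat_one_castSucc_last A i
    | cast j =>
      rw [extMat_one_castSucc_castSucc]
      exact hrow j (fun h => hj₁ (congrArg _ h)) (fun h => hj₂ (congrArg _ h))
  obtain ⟨τ, hτ₁, hτ₂⟩ : ∃ τ : Equiv.Perm (Fin (k + 1)),
      τ j₁.castSucc = i.castSucc ∧ τ j₂.castSucc = Fin.last k :=
    ⟨Equiv.swap j₁.castSucc i.castSucc * Equiv.swap j₂.castSucc (Fin.last k),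
      by rw [Equiv.Perm.mul_apply, Equiv.swap_apply_of_ne_of_ne hj' (Fin.castSucc_ne_last j₁),
        Equiv.swap_apply_left],
      by rw [Equiv.Perm.mul_apply, Equiv.swap_apply_left, Equiv.swap_apply_of_ne_of_ne
        (Fin.castSucc_ne_last j₁).symm (Fin.castSucc_ne_last i).symm]⟩
  have hM : ∀ c, (extMat A 1 * (extMat A 1).submatrix τ τ) i.castSucc (τ⁻¹ c) =
      A i j₁ * extMat A 1 i.castSucc c + A i j₂ * extMat A 1 (Fin.last k) c := by
    intro c
    rw [Matrix.mul_apply_of_row_support _ hj' hrowB]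
    simp [hτ₁, hτ₂]
  refine ⟨_, C.mul_mem _ _ hB (C.submatrix_mem hB τ), i.castSucc, τ⁻¹ j₁.castSucc,
    τ⁻¹ j₂.castSucc, τ⁻¹ (Fin.last k), τ⁻¹.injective.ne hj',
    τ⁻¹.injective.ne (Fin.castSucc_ne_last j₁), τ⁻¹.injective.ne (Fin.castSucc_ne_last j₂),
    ?_, ?_, ?_⟩ <;>
  simp only [hM] <;> simp [extMat_one_last_apply, Fin.castSucc_ne_last, h₁, h₂]

end MatrixClass

theorem class_row_same_sign (C : MatrixClass)
    (h : ∃ (k : ℕ) (A : Matrix (Fin k) (Fin k) ℤ), A ∈ C.carrier k ∧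
      ∃ (i j₁ j₂ : Fin k), j₁ ≠ j₂ ∧ A i j₁ ≠ 0 ∧ A i j₂ ≠ 0) :
    ∃ (k : ℕ) (D : Matrix (Fin k) (Fin k) ℤ), D ∈ C.carrier k ∧
      ∃ (i j₁ j₂ : Fin k), j₁ ≠ j₂ ∧ 0 < D i j₁ * D i j₂ := by
  obtain ⟨k, A, hA, i, j₁, j₂, hj, h₁, h₂⟩ := h
  by_cases hthird : ∃ j₃, j₃ ≠ j₁ ∧ j₃ ≠ j₂ ∧ A i j₃ ≠ 0
  · obtain ⟨j₃, hj₃₁, hj₃₂, h₃⟩ := hthird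
    exact ⟨k, A, hA, i,
      exists_ne_pos_mul_of_three_ne_zero hj hj₃₁.symm hj₃₂.symm h₁ h₂ h₃⟩
  · push Not at hthird
    obtain ⟨M, hM, r, c₁, c₂, c₃, h₁₂, h₁₃, h₂₃, hc₁, hc₂, hc₃⟩ :=
      C.exists_row_three_ne_zero_of_row_support_pair hA hj h₁ h₂ hthird
    exact ⟨k + 1, M, hM, r, exists_ne_pos_mul_of_three_ne_zero h₁₂ h₁₃ h₂₃ hc₁ hc₂ hc₃⟩
end

section
/- Fix d ≥ 1 and a matrix C ∈ ℤ^{d×d} satisfying λ_{ℓ+1} ≥ 2·λ_ℓ for every ℓ ∈ ℕ. Then for every binary word x ∈ {0,1}^*, it holds that λ_{|x|} ≤ γ_x < 2·λ_{|x|}. -/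
/-- The first standard basis vector `e₁` of `ℤ^d` (for `d ≥ 1`). -/
def eVec (d : ℕ) (hd : 0 < d) : Fin d → ℤ := Pi.single ⟨0, hd⟩ 1

/-- For a binary word `x = x₁…x_n`, `fWord C e x v = (f_{x_n} ∘ ⋯ ∘ f_{x_1}) v`,
where `f_b w = C·w + b·e`. -/
def fWord {d : ℕ} (C : Matrix (Fin d) (Fin d) ℤ) (e : Fin d → ℤ)
    (x : List Bool) (v : Fin d → ℤ) : Fin d → ℤ :=
  x.foldl (fun w b => C.mulVec w + (if b then (1 : ℤ) else 0) • e) v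

/-- `lam C hd ℓ = (C^ℓ·e₁)(1)`, the first entry of `C^ℓ·e₁`. -/
def lam {d : ℕ} (C : Matrix (Fin d) (Fin d) ℤ) (hd : 0 < d) (ℓ : ℕ) : ℤ :=
  ((C ^ ℓ).mulVec (eVec d hd)) ⟨0, hd⟩

/-- `gam C hd x = f_x(e₁)(1)`, the first entry of `f_x(e₁)`. -/
def gam {d : ℕ} (C : Matrix (Fin d) (Fin d) ℤ) (hd : 0 < d) (x : List Bool) : ℤ :=
  fWord C (eVec d hd) x (eVec d hd) ⟨0, hd⟩

lemma fWord_nil {d : ℕ} (C : Matrix (Fin d) (Fin d) ℤ) (e : Fin d → ℤ) (v : Fin d → ℤ) :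
    fWord C e [] v = v := rfl

lemma fWord_cons {d : ℕ} (C : Matrix (Fin d) (Fin d) ℤ) (e : Fin d → ℤ) (b : Bool)
    (x : List Bool) (v : Fin d → ℤ) :
    fWord C e (b :: x) v = fWord C e x (C.mulVec v + (if b then (1 : ℤ) else 0) • e) := rfl

lemma lam_zero {d : ℕ} (C : Matrix (Fin d) (Fin d) ℤ) (hd : 0 < d) : lam C hd 0 = 1 := by
  simp [lam, eVec, Matrix.mulVec_single]

lemma lam_pos {d : ℕ} (C : Matrix (Fin d) (Fin d) ℤ) (hd : 0 < d)
    (hC : ∀ ℓ : ℕ, 2 * lam C hd ℓ ≤ lam C hd (ℓ + 1)) (n : ℕ) : 1 ≤ lam C hd n := by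
  induction n with
  | zero => rw [lam_zero]
  | succ n ih => have := hC n; omega

lemma fWord_affine {d : ℕ} (C : Matrix (Fin d) (Fin d) ℤ) (e : Fin d → ℤ)
    (x : List Bool) (v : Fin d → ℤ) :
    fWord C e x v = (C ^ x.length).mulVec v + fWord C e x 0 := by
  induction x generalizing v with
  | nil => simp [fWord_nil]
  | cons b x ih =>
    rw [fWord_cons, fWord_cons, ih, ih (C.mulVec 0 + _)]
    rw [Matrix.mulVec_zero, zero_add, Matrix.mulVec_add]
    rw [List.length_cons, pow_succ, Matrix.mulVec_mulVec]
    abel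

lemma t_bounds {d : ℕ} (hd : 0 < d) (C : Matrix (Fin d) (Fin d) ℤ)
    (hC : ∀ ℓ : ℕ, 2 * lam C hd ℓ ≤ lam C hd (ℓ + 1)) (x : List Bool) :
    0 ≤ fWord C (eVec d hd) x 0 ⟨0, hd⟩ ∧
      fWord C (eVec d hd) x 0 ⟨0, hd⟩ ≤ lam C hd x.length - 1 := by
  induction x with
  | nil => simp [fWord_nil, lam_zero]
  | cons b x ih =>
    rw [fWord_cons, Matrix.mulVec_zero, zero_add, fWord_affine]
    have hsm : ((C ^ x.length).mulVec ((if b then (1:ℤ) else 0) • eVec d hd)) ⟨0, hd⟩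
        = (if b then (1:ℤ) else 0) * lam C hd x.length := by
      rw [Matrix.mulVec_smul]
      simp [lam, smul_eq_mul]
    have h1 := lam_pos C hd hC x.length
    have h2 := hC x.length
    simp only [Pi.add_apply, hsm, List.length_cons]
    cases b <;> simp <;> omega

theorem gam_bounds {d : ℕ} (hd : 0 < d) (C : Matrix (Fin d) (Fin d) ℤ)
    (hC : ∀ ℓ : ℕ, 2 * lam C hd ℓ ≤ lam C hd (ℓ + 1)) (x : List Bool) :
    lam C hd x.length ≤ gam C hd x ∧ gam C hd x < 2 * lam C hd x.length := by
  have h := t_bounds hd C hC x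
  have : gam C hd x = lam C hd x.length + fWord C (eVec d hd) x 0 ⟨0, hd⟩ := by
    rw [gam, fWord_affine]; rfl
  omega
end

section
/- Fix d ≥ 1 and a matrix C ∈ ℤ^{d×d} satisfying λ_{ℓ+1} ≥ 2·λ_ℓ for every ℓ ∈ ℕ. Let x, y ∈ {0,1}^* be binary words such that either |x| < |y|, or |x| = |y| and x is strictly smaller than y in the lexicographic order on equal-length words with 0 < 1 (i.e., x = u0v and y = u1w for some words u, v, w). Then γ_x < γ_y. -/
namespace GamAux

variable {d : ℕ} (C : Matrix (Fin d) (Fin d) ℤ) (hd : 0 < d)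

lemma fWord_cons (e : Fin d → ℤ) (b : Bool) (x : List Bool) (v : Fin d → ℤ) :
    fWord C e (b :: x) v = fWord C e x (C.mulVec v + (if b then (1 : ℤ) else 0) • e) := rfl

lemma fWord_append (e : Fin d → ℤ) (u s : List Bool) (v : Fin d → ℤ) :
    fWord C e (u ++ s) v = fWord C e s (fWord C e u v) := by
  simp [fWord, List.foldl_append]

lemma fWord_affine (e : Fin d → ℤ) : ∀ (x : List Bool) (v : Fin d → ℤ),
    fWord C e x v = (C ^ x.length).mulVec v + fWord C e x 0 := by
  intro x
  induction x with
  | nil => intro v; simp [fWord]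
  | cons b x ih =>
    intro v
    rw [fWord_cons, fWord_cons, ih, ih (C.mulVec 0 + (if b then (1 : ℤ) else 0) • e)]
    simp only [Matrix.mulVec_add, Matrix.mulVec_mulVec, Matrix.mulVec_zero, zero_add,
      List.length_cons]
    rw [← pow_succ]
    abel

/-- First entry of `fWord x 0`. -/
def D (x : List Bool) : ℤ := fWord C (eVec d hd) x 0 ⟨0, hd⟩

lemma gam_eq (x : List Bool) : gam C hd x = lam C hd x.length + D C hd x := by
  rw [gam, fWord_affine, Pi.add_apply, lam, D]

lemma D_nil : D C hd [] = 0 := by simp [D, fWord]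

lemma D_cons (b : Bool) (x : List Bool) :
    D C hd (b :: x) = (if b then (1 : ℤ) else 0) * lam C hd x.length + D C hd x := by
  rw [D, fWord_cons, Matrix.mulVec_zero, zero_add, fWord_affine, Pi.add_apply,
    Matrix.mulVec_smul]
  rw [D, lam]
  simp [smul_eq_mul]

lemma lam_zero : lam C hd 0 = 1 := by
  simp [lam, eVec, Matrix.one_mulVec]

lemma one_le_lam (hC : ∀ ℓ : ℕ, 2 * lam C hd ℓ ≤ lam C hd (ℓ + 1)) (n : ℕ) :
    1 ≤ lam C hd n := by
  induction n with
  | zero => rw [lam_zero]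
  | succ n ih => have := hC n; linarith

lemma lam_mono (hC : ∀ ℓ : ℕ, 2 * lam C hd ℓ ≤ lam C hd (ℓ + 1)) :
    Monotone (lam C hd) := by
  apply monotone_nat_of_le_succ
  intro n
  have := hC n
  have := one_le_lam C hd hC n
  linarith

lemma D_nonneg (hC : ∀ ℓ : ℕ, 2 * lam C hd ℓ ≤ lam C hd (ℓ + 1)) (x : List Bool) :
    0 ≤ D C hd x := by
  induction x with
  | nil => rw [D_nil]
  | cons b x ih =>
    have := one_le_lam C hd hC x.length
    cases b <;> simp [D_cons] <;> linarith

lemma D_lt (hC : ∀ ℓ : ℕ, 2 * lam C hd ℓ ≤ lam C hd (ℓ + 1)) (x : List Bool) :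
    D C hd x + 1 ≤ lam C hd x.length := by
  induction x with
  | nil => simp [D_nil, lam_zero]
  | cons b x ih =>
    have h1 := one_le_lam C hd hC x.length
    have h2 := hC x.length
    cases b <;> simp [D_cons] <;> linarith

end GamAux

theorem gam_strictMono {d : ℕ} (hd : 0 < d) (C : Matrix (Fin d) (Fin d) ℤ)
    (hC : ∀ ℓ : ℕ, 2 * lam C hd ℓ ≤ lam C hd (ℓ + 1)) (x y : List Bool)
    (hxy : x.length < y.length ∨
      (x.length = y.length ∧
        ∃ u v w : List Bool, x = u ++ false :: v ∧ y = u ++ true :: w)) :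
    gam C hd x < gam C hd y := by
  open GamAux in
  rcases hxy with h | ⟨hlen, u, v, w, hx, hy⟩
  · have h1 := GamAux.D_lt C hd hC x
    have h2 := GamAux.D_nonneg C hd hC y
    have h3 := hC x.length
    have h4 := GamAux.lam_mono C hd hC (show x.length + 1 ≤ y.length from h)
    have h5 := GamAux.one_le_lam C hd hC x.length
    rw [GamAux.gam_eq, GamAux.gam_eq]
    linarith
  · subst hx; subst hy
    have hvw : v.length = w.length := by
      simp at hlen; omega
    have key : ∀ s : List Bool, gam C hd (u ++ s) =
        ((C ^ s.length).mulVec (fWord C (eVec d hd) u (eVec d hd))) ⟨0, hd⟩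
          + GamAux.D C hd s := by
      intro s
      rw [gam, GamAux.fWord_append, GamAux.fWord_affine, Pi.add_apply, GamAux.D]
    rw [key, key]
    have hlens : (false :: v).length = (true :: w).length := by simp [hvw]
    rw [hlens]
    have h1 := GamAux.D_lt C hd hC v
    have h2 := GamAux.D_nonneg C hd hC w
    rw [GamAux.D_cons, GamAux.D_cons]
    norm_num
    rw [← hvw]
    linarith
end

section
/- Let d ≥ 1, n ≥ 3, and let A ∈ ℤ^{d×d} be a transfer matrix with A_{a,b} = 1 for some a ≠ b in {1,…,d}. Let A' = diag(A, I_n) ∈ ℤ^{(d+n)×(d+n)}, and for distinct s, t ∈ {d+1,…,d+n} let B_{s,t} = P_π·A'·P_{π⁻¹} where π is the permutation (b s)(a t). Let X ⊆ {d+1,…,d+n} and z ∈ {d+1,…,d+n} \ X, and for distinct x, y ∈ X let F_{x,y} = B_{z,x}·B_{x,y}·B_{y,z}. Then for every vector v ∈ ℤ^{d+n} with v(j) = 0 for all j ∉ X: (F_{x,y}·v)(x) = v(y), (F_{x,y}·v)(y) = v(x), (F_{x,y}·v)(u) = v(u) for every u ∈ X \ {x,y}, and (F_{x,y}·v)(j)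 = 0 for every j ∉ X. -/
/-- Conjugation of a matrix by a permutation: `σ(M) = P_σ · M · P_{σ⁻¹}`. -/
def conjMat {m : ℕ} (σ : Equiv.Perm (Fin m)) (M : Matrix (Fin m) (Fin m) ℤ) :
    Matrix (Fin m) (Fin m) ℤ :=
  permMat σ * M * permMat σ⁻¹

/-- A square integer matrix is a *transfer* matrix if all its entries lie in `{0, 1}`
and each of its columns contains at most one nonzero entry. -/
def IsTransfer {k : ℕ} (A : Matrix (Fin k) (Fin k) ℤ) : Prop :=
  (∀ i j, A i j = 0 ∨ A i j = 1) ∧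
  ∀ j i₁ i₂, A i₁ j ≠ 0 → A i₂ j ≠ 0 → i₁ = i₂

/-- `Bmat A a b s t = P_π · diag(A, I_n) · P_{π⁻¹}` where `π = (b s)(a t)`. -/
def Bmat {d n : ℕ} (A : Matrix (Fin d) (Fin d) ℤ) (a b : Fin d)
    (s t : Fin (d + n)) : Matrix (Fin (d + n)) (Fin (d + n)) ℤ :=
  conjMat (Equiv.swap (Fin.castAdd n b) s * Equiv.swap (Fin.castAdd n a) t) (extMat A n)

lemma conjMat_apply {m : ℕ} (σ : Equiv.Perm (Fin m)) (M : Matrix (Fin m) (Fin m) ℤ)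
    (i j : Fin m) : conjMat σ M i j = M (σ⁻¹ i) (σ⁻¹ j) := by
  simp only [conjMat, permMat, Matrix.mul_apply, Matrix.of_apply, ite_mul, one_mul, zero_mul,
    mul_ite, mul_one, mul_zero]
  rw [Finset.sum_eq_single (σ⁻¹ j)]
  · rw [if_pos (by simp), Finset.sum_eq_single (σ⁻¹ i)]
    · rw [if_pos (by simp)]
    · intro k _ hk
      rw [if_neg fun h => hk (by rw [h]; simp)]
    · simp
  · intro k _ hk
    rw [if_neg hk]
  · simp

lemma extMat_apply {d n : ℕ} (A : Matrix (Fin d) (Fin d) ℤ) (i j : Fin (d + n)) :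
    extMat A n i j = if hi : (i : ℕ) < d then
      (if hj : (j : ℕ) < d then A ⟨i, hi⟩ ⟨j, hj⟩ else 0)
    else (if i = j then 1 else 0) := by
  induction i using Fin.addCases with
  | left i0 =>
    induction j using Fin.addCases with
    | left j0 =>
      simp [extMat, Fin.is_lt]
    | right j0 =>
      simp [extMat]
  | right i0 =>
    induction j using Fin.addCases with
    | left j0 =>
      simp [extMat, Fin.ext_iff]
      omega
    | right j0 =>
      simp [extMat, Matrix.one_apply, Fin.ext_iff]

lemma Bmat_mulVec {d n : ℕ} (A : Matrix (Fin d) (Fin d) ℤ) (hA : IsTransfer A)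
    (a b : Fin d) (hab : a ≠ b) (hAab : A a b = 1)
    (s t : Fin (d + n)) (hs : d ≤ s.val) (ht : d ≤ t.val) (hst : s ≠ t)
    (v : Fin (d + n) → ℤ) (hv : ∀ j, v j ≠ 0 → d ≤ j.val) (hvt : v t = 0) :
    (Bmat A a b s t).mulVec v = fun i =>
      if i = t then v s else if i = s then 0 else if d ≤ (i : ℕ) then v i else 0 := by
  set a' : Fin (d + n) := Fin.castAdd n a with ha'
  set b' : Fin (d + n) := Fin.castAdd n b with hb'
  set π : Equiv.Perm (Fin (d + n)) := Equiv.swap b' s * Equiv.swap a' t with hπ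
  have ha'v : (a' : ℕ) = a := rfl
  have hb'v : (b' : ℕ) = b := rfl
  have ha'd : (a' : ℕ) < d := a.isLt
  have hb'd : (b' : ℕ) < d := b.isLt
  have ha's : a' ≠ s := by intro h; rw [← h] at hs; omega
  have ha't : a' ≠ t := by intro h; rw [← h] at ht; omega
  have hb's : b' ≠ s := by intro h; rw [← h] at hs; omega
  have hb't : b' ≠ t := by intro h; rw [← h] at ht; omega
  have ha'b' : a' ≠ b' := by
    intro h; exact hab (Fin.ext (by rw [← ha'v, ← hb'v, h]))
  -- column b of A is zero off row a
  have colb : ∀ p : Fin d, p ≠ a → A p b = 0 := by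
    intro p hp
    by_contra h
    exact hp (hA.2 b p a h (by rw [hAab]; exact one_ne_zero))
  have hAbb : A b b = 0 := colb b (Ne.symm hab)
  -- inverse values of π
  have hπinv : ∀ u, π⁻¹ u = Equiv.swap a' t (Equiv.swap b' s u) := by
    intro u
    simp [hπ, mul_inv_rev, Equiv.Perm.mul_apply]
  have hπs : π⁻¹ s = b' := by
    rw [hπinv, Equiv.swap_apply_right, Equiv.swap_apply_of_ne_of_ne ha'b'.symm hb't]
  have hπt : π⁻¹ t = a' := by
    rw [hπinv, Equiv.swap_apply_of_ne_of_ne hb't.symm (Ne.symm hst), Equiv.swap_apply_right]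
  have hπtail : ∀ j : Fin (d + n), d ≤ (j : ℕ) → j ≠ s → j ≠ t → π⁻¹ j = j := by
    intro j hj hjs hjt
    have hja : j ≠ a' := fun h => by rw [h] at hj; omega
    have hjb : j ≠ b' := fun h => by rw [h] at hj; omega
    rw [hπinv, Equiv.swap_apply_of_ne_of_ne hjb hjs, Equiv.swap_apply_of_ne_of_ne hja hjt]
  have hπinj : Function.Injective (π⁻¹ : Equiv.Perm (Fin (d+n))) := (π⁻¹).injective
  -- compute
  funext i
  rw [Matrix.mulVec]
  show ∑ j, Bmat A a b s t i j * v j = _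
  have hB : ∀ j, Bmat A a b s t i j = extMat A n (π⁻¹ i) (π⁻¹ j) := fun j =>
    conjMat_apply _ _ i j
  by_cases hit : i = t
  · rw [if_pos hit]
    have hπi : π⁻¹ i = a' := by rw [hit, hπt]
    rw [Finset.sum_eq_single s]
    · rw [hB, hπi, hπs, extMat_apply, dif_pos ha'd, dif_pos hb'd]
      have e : A ⟨(a' : ℕ), ha'd⟩ ⟨(b' : ℕ), hb'd⟩ = A a b := by congr 1 <;> exact Fin.ext rfl
      rw [e, hAab, one_mul]
    · intro j _ hjs
      by_cases hjv : v j = 0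
      · rw [hjv, mul_zero]
      · by_cases hjt : j = t
        · rw [hjt, hvt, mul_zero]
        · have hjtl := hv j hjv
          rw [hB, hπi, hπtail j hjtl hjs hjt, extMat_apply, dif_pos ha'd,
            dif_neg (by omega), zero_mul]
    · intro h; exact absurd (Finset.mem_univ s) h
  · by_cases his : i = s
    · rw [if_neg hit, if_pos his]
      have hπi : π⁻¹ i = b' := by rw [his, hπs]
      apply Finset.sum_eq_zero
      intro j _
      by_cases hjv : v j = 0
      · rw [hjv, mul_zero]
      · by_cases hjs : j = s
        · rw [hjs, hB, hπi, hπs, extMat_apply, dif_pos hb'd, dif_pos hb'd]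
          have e : A ⟨(b' : ℕ), hb'd⟩ ⟨(b' : ℕ), hb'd⟩ = A b b := by congr 1 <;> exact Fin.ext rfl
          rw [e, hAbb, zero_mul]
        · by_cases hjt : j = t
          · rw [hjt, hvt, mul_zero]
          · have hjtl := hv j hjv
            rw [hB, hπi, hπtail j hjtl hjs hjt, extMat_apply, dif_pos hb'd,
              dif_neg (by omega), zero_mul]
    · by_cases hid : d ≤ (i : ℕ)
      · -- tail, i ∉ {s,t}: result v i
        rw [if_neg hit, if_neg his, if_pos hid]
        have hπi : π⁻¹ i = i := hπtail i hid his hit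
        rw [Finset.sum_eq_single i]
        · rw [hB, hπi, extMat_apply, dif_neg (by omega), if_pos rfl, one_mul]
        · intro j _ hji
          rw [hB, hπi, extMat_apply, dif_neg (by omega),
            if_neg (fun h => hji (by rw [← hπi] at h; exact (hπinj h).symm)), zero_mul]
        · intro h; exact absurd (Finset.mem_univ i) h
      · -- head: result 0
        rw [if_neg hit, if_neg his, if_neg hid]
        apply Finset.sum_eq_zero
        intro j _
        by_cases hjv : v j = 0
        · rw [hjv, mul_zero]
        · have hjtl := hv j hjv
          by_cases hjt : j = t
          · rw [hjt, hvt, mul_zero]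
          · by_cases hjs : j = s
            · have hia : π⁻¹ i ≠ a' := by
                intro h
                rw [← hπt] at h
                exact hit (hπinj h)
              rw [hjs, hB, hπs, extMat_apply]
              by_cases hrow : ((π⁻¹ i : Fin (d+n)) : ℕ) < d
              · rw [dif_pos hrow, dif_pos hb'd]
                have hb2 : (⟨(b' : ℕ), hb'd⟩ : Fin d) = b := Fin.ext rfl
                have hra : (⟨((π⁻¹ i : Fin (d+n)) : ℕ), hrow⟩ : Fin d) ≠ a := by
                  intro h
                  exact hia (Fin.ext (show ((π⁻¹ i : Fin (d+n)) : ℕ) = (a' : ℕ) by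
                    rw [ha'v]; exact congrArg Fin.val h))
                rw [hb2, colb _ hra, zero_mul]
              · rw [dif_neg hrow, if_neg (fun h => hrow (by rw [h]; exact hb'd)), zero_mul]
            · have hπj : π⁻¹ j = j := hπtail j hjtl hjs hjt
              rw [hB, hπj, extMat_apply]
              by_cases hrow : ((π⁻¹ i : Fin (d+n)) : ℕ) < d
              · rw [dif_pos hrow, dif_neg (by omega), zero_mul]
              · rw [dif_neg hrow,
                  if_neg (fun h => hid (by
                    have hij : i = j := hπinj (show π⁻¹ i = π⁻¹ j by rw [hπj]; exact h)
                    rw [hij]; exact hjtl)),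
                  zero_mul]


theorem transfer_swap {d n : ℕ} (hd : 0 < d) (hn : 3 ≤ n)
    (A : Matrix (Fin d) (Fin d) ℤ) (hA : IsTransfer A)
    (a b : Fin d) (hab : a ≠ b) (hAab : A a b = 1)
    (X : Set (Fin (d + n))) (hX : ∀ i ∈ X, d ≤ i.val)
    (z : Fin (d + n)) (hz : d ≤ z.val) (hzX : z ∉ X)
    (x y : Fin (d + n)) (hx : x ∈ X) (hy : y ∈ X) (hxy : x ≠ y)
    (v : Fin (d + n) → ℤ) (hv : ∀ j, j ∉ X → v j = 0) :
    ((Bmat A a b z x * Bmat A a b x y * Bmat A a b y z).mulVec v) x = v y ∧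
    ((Bmat A a b z x * Bmat A a b x y * Bmat A a b y z).mulVec v) y = v x ∧
    (∀ u ∈ X, u ≠ x → u ≠ y →
      ((Bmat A a b z x * Bmat A a b x y * Bmat A a b y z).mulVec v) u = v u) ∧
    (∀ j, j ∉ X →
      ((Bmat A a b z x * Bmat A a b x y * Bmat A a b y z).mulVec v) j = 0) := by
  have hx' : d ≤ (x : ℕ) := hX x hx
  have hy' : d ≤ (y : ℕ) := hX y hy
  have hxz : x ≠ z := fun h => hzX (h ▸ hx)
  have hyz : y ≠ z := fun h => hzX (h ▸ hy)
  have hsupp : ∀ j, v j ≠ 0 → d ≤ (j : ℕ) := by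
    intro j h
    by_contra hj
    exact h (hv j (fun hmem => hj (hX j hmem)))
  have hvz : v z = 0 := hv z hzX
  set g1 : Fin (d + n) → ℤ := fun i =>
    if i = z then v y else if i = y then 0 else if d ≤ (i : ℕ) then v i else 0 with hg1
  have e1 : (Bmat A a b y z).mulVec v = g1 :=
    Bmat_mulVec A hA a b hab hAab y z hy' hz hyz v hsupp hvz
  have hg1supp : ∀ j, g1 j ≠ 0 → d ≤ (j : ℕ) := by
    intro j h
    rw [hg1] at h
    simp only at h
    split_ifs at h with h1 h2 h3
    · rw [h1]; exact hz
    · exact absurd rfl h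
    · exact h3
    · exact absurd rfl h
  have hg1y : g1 y = 0 := by
    rw [hg1]; simp only
    rw [if_neg hyz, if_pos trivial]
  set g2 : Fin (d + n) → ℤ := fun i =>
    if i = y then g1 x else if i = x then 0 else if d ≤ (i : ℕ) then g1 i else 0 with hg2
  have e2 : (Bmat A a b x y).mulVec g1 = g2 :=
    Bmat_mulVec A hA a b hab hAab x y hx' hy' hxy g1 hg1supp hg1y
  have hg2supp : ∀ j, g2 j ≠ 0 → d ≤ (j : ℕ) := by
    intro j h
    rw [hg2] at h
    simp only at h
    split_ifs at h with h1 h2 h3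
    · rw [h1]; exact hy'
    · exact absurd rfl h
    · exact h3
    · exact absurd rfl h
  have hg2x : g2 x = 0 := by
    rw [hg2]; simp only
    rw [if_neg hxy, if_pos trivial]
  set g3 : Fin (d + n) → ℤ := fun i =>
    if i = x then g2 z else if i = z then 0 else if d ≤ (i : ℕ) then g2 i else 0 with hg3
  have hzx : z ≠ x := Ne.symm hxz
  have e3 : (Bmat A a b z x).mulVec g2 = g3 :=
    Bmat_mulVec A hA a b hab hAab z x hz hx' hzx g2 hg2supp hg2x
  have E : (Bmat A a b z x * Bmat A a b x y * Bmat A a b y z).mulVec v = g3 := by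
    rw [← Matrix.mulVec_mulVec, ← Matrix.mulVec_mulVec, e1, e2, e3]
  rw [E]
  have hg2z : g2 z = v y := by
    rw [hg2]; simp only
    rw [if_neg (Ne.symm hyz), if_neg hzx, if_pos hz, hg1]; simp only
    rw [if_pos trivial]
  refine ⟨?_, ?_, ?_, ?_⟩
  · rw [hg3]; simp only
    rw [if_pos trivial, hg2z]
  · rw [hg3]; simp only
    rw [if_neg (Ne.symm hxy), if_neg hyz, if_pos hy', hg2]; simp only
    rw [if_pos trivial, hg1]; simp only
    rw [if_neg hxz, if_neg hxy, if_pos hx']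
  · intro u hu hux huy
    have hu' : d ≤ (u : ℕ) := hX u hu
    have huz : u ≠ z := fun h => hzX (h ▸ hu)
    rw [hg3]; simp only
    rw [if_neg hux, if_neg huz, if_pos hu', hg2]; simp only
    rw [if_neg huy, if_neg hux, if_pos hu', hg1]; simp only
    rw [if_neg huz, if_neg huy, if_pos hu']
  · intro j hj
    have hjx : j ≠ x := fun h => hj (h ▸ hx)
    have hjy : j ≠ y := fun h => hj (h ▸ hy)
    rw [hg3]; simp only
    by_cases hjz : j = z
    · rw [if_neg (hjz ▸ hzx), if_pos hjz]
    · rw [if_neg hjx, if_neg hjz]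
      by_cases hjd : d ≤ (j : ℕ)
      · rw [if_pos hjd, hg2]; simp only
        rw [if_neg hjy, if_neg hjx, if_pos hjd, hg1]; simp only
        rw [if_neg hjz, if_neg hjy, if_pos hjd]
        exact hv j hj
      · rw [if_neg hjd]
end
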